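/- Let H be a group with a group Φ acting by automorphisms. Suppose there exist an integer e > 1 and elements h_1,…,h_k ∈ H each of order e such that for every φ ∈ Φ and i ≠ j the subgroups φ(⟨h_i⟩) and ⟨h_j⟩ intersect trivially. Then CC(H,Φ) ≥ k. -/
import Mathlib


/-- `CC H Φ`: the smallest number of cyclic subgroups of `H` whose `Φ`-orbits cover `H`. -/
noncomputable def CC (H Φ : Type*) [Group H] [Group Φ] [MulDistribMulAction Φ H] : ℕ∞ :=
  sInf {n : ℕ∞ | ∃ s : Finset H, (s.card : ℕ∞) = n ∧
    ∀ x : H, ∃ g ∈ s, ∃ φ : Φ, x ∈ Subgroup.zpowers (φ • g)}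

/-- In a cyclic group, two elements of the same finite order generate the same subgroup. -/
lemma aux_cyclic_mem_zpowers {G : Type*} [Group G] [IsCyclic G] {x y : G} {e : ℕ}
    (he : 0 < e) (hx : orderOf x = e) (hy : orderOf y = e) : y ∈ Subgroup.zpowers x := by
  letI : CommGroup G := IsCyclic.commGroup
  set T : Subgroup G := (powMonoidHom e : G →* G).ker with hT
  have hmem : ∀ z : G, z ∈ T ↔ z ^ e = 1 := fun z => by
    simp [hT, MonoidHom.mem_ker, powMonoidHom_apply]
  have hxT : x ∈ T := (hmem x).mpr (by rw [← hx]; exact pow_orderOf_eq_one x)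
  have hyT : y ∈ T := (hmem y).mpr (by rw [← hy]; exact pow_orderOf_eq_one y)
  obtain ⟨t, ht⟩ := IsCyclic.exists_generator (α := T)
  have h1 : orderOf t ∣ e := by
    apply orderOf_dvd_of_pow_eq_one
    have : ((t : G)) ^ e = 1 := (hmem (t : G)).mp t.2
    exact Subtype.ext (by push_cast; exact this)
  have h2 : e ∣ orderOf t := by
    have := orderOf_dvd_of_mem_zpowers (ht ⟨x, hxT⟩)
    rwa [Subgroup.orderOf_mk, hx] at this
  have hto : orderOf t = e := Nat.dvd_antisymm h1 h2
  have hcardT : Nat.card T = e := by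
    rw [← orderOf_eq_card_of_forall_mem_zpowers ht, hto]
  have : Finite T := Nat.finite_of_card_ne_zero (by omega)
  have hle : Subgroup.zpowers x ≤ T := Subgroup.zpowers_le.mpr hxT
  have hcardx : Nat.card (Subgroup.zpowers x) = e := by rw [Nat.card_zpowers, hx]
  have heq : Subgroup.zpowers x = T :=
    Subgroup.eq_of_le_of_card_ge hle (by rw [hcardT, hcardx])
  exact heq ▸ hyT

/-- `zpowers c` is a cyclic group. -/
lemma aux_isCyclic_zpowers {G : Type*} [Group G] (c : G) :
    IsCyclic (Subgroup.zpowers c) := by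
  refine ⟨⟨⟨c, Subgroup.mem_zpowers c⟩, ?_⟩⟩
  rintro ⟨x, n, rfl⟩
  exact ⟨n, Subtype.ext (by push_cast; rfl)⟩

/-- Two elements of equal finite order in a common cyclic subgroup generate each other. -/
lemma aux_mem_zpowers {G : Type*} [Group G] {c x y : G}
    (hx : x ∈ Subgroup.zpowers c) (hy : y ∈ Subgroup.zpowers c) {e : ℕ}
    (he : 0 < e) (hox : orderOf x = e) (hoy : orderOf y = e) : y ∈ Subgroup.zpowers x := by
  haveI := aux_isCyclic_zpowers c
  have key : (⟨y, hy⟩ : Subgroup.zpowers c) ∈ Subgroup.zpowers (⟨x, hx⟩ : Subgroup.zpowers c) :=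
    aux_cyclic_mem_zpowers he (by rw [Subgroup.orderOf_mk]; exact hox)
      (by rw [Subgroup.orderOf_mk]; exact hoy)
  obtain ⟨n, hn⟩ := key
  exact ⟨n, by have := congrArg (Subtype.val) hn; push_cast at this; exact this⟩

/-- If `H` contains elements `h_1, …, h_k`, all of the same order `e > 1`, such that
`φ(⟨h_i⟩) ∩ ⟨h_j⟩ = 1` for all `φ ∈ Φ` and `i ≠ j`, then `CC(H,Φ) ≥ k`. -/
theorem stmt_9 {H Φ : Type*} [Group H] [Group Φ] [MulDistribMulAction Φ H]
    (e k : ℕ) (he : 1 < e) (h : Fin k → H) (horder : ∀ i, orderOf (h i) = e)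
    (hint : ∀ (φ : Φ) (i j : Fin k), i ≠ j →
      Subgroup.zpowers (φ • h i) ⊓ Subgroup.zpowers (h j) = ⊥) :
    (k : ℕ∞) ≤ CC H Φ := by
  apply le_sInf
  rintro n ⟨s, rfl, hcover⟩
  -- choose for each i an element g i ∈ s and φ i with h i ∈ zpowers (φ i • g i)
  choose g hgs φ hφ using fun i => hcover (h i)
  -- g is injective
  have hginj : Function.Injective g := by
    intro i j hij
    by_contra hne
    -- h i ∈ zpowers (φ i • g i), h j ∈ zpowers (φ j • g j) = zpowers (φ j • g i)
    -- move h i into zpowers (φ j • g i) via ψ := φ j * (φ i)⁻¹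
    set ψ : Φ := φ j * (φ i)⁻¹ with hψ
    have hsm : ψ • (φ i • g i) = φ j • g i := by
      rw [hψ, smul_smul, mul_assoc, inv_mul_cancel, mul_one]
    have hx : ψ • h i ∈ Subgroup.zpowers (φ j • g i) := by
      obtain ⟨m, hm⟩ := hφ i
      refine ⟨m, ?_⟩
      show (φ j • g i) ^ m = ψ • h i
      rw [← hm, ← hsm]
      exact (map_zpow (MulDistribMulAction.toMulEquiv H ψ) (φ i • g i) m).symm
    have hy : h j ∈ Subgroup.zpowers (φ j • g i) := by rw [hij]; exact hφ j
    have hox : orderOf (ψ • h i) = e := by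
      have := (MulDistribMulAction.toMulEquiv H ψ).orderOf_eq (h i)
      simpa [horder i] using this
    have hmem : h j ∈ Subgroup.zpowers (ψ • h i) :=
      aux_mem_zpowers hx hy (by omega) hox (horder j)
    have : h j ∈ Subgroup.zpowers (ψ • h i) ⊓ Subgroup.zpowers (h j) :=
      ⟨hmem, Subgroup.mem_zpowers _⟩
    rw [hint ψ i j hne, Subgroup.mem_bot] at this
    have h2 := horder j
    rw [this, orderOf_one] at h2
    omega
  -- hence k ≤ s.card
  have hk : k ≤ s.card := by
    classical
    have : (Finset.univ.image g).card = k := by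
      rw [Finset.card_image_of_injective _ hginj, Finset.card_univ, Fintype.card_fin]
    have hsub : Finset.univ.image g ⊆ s := by
      intro x hx
      simp only [Finset.mem_image] at hx
      obtain ⟨i, _, rfl⟩ := hx
      exact hgs i
    calc k = (Finset.univ.image g).card := this.symm
      _ ≤ s.card := Finset.card_le_card hsub
  exact_mod_cast hk
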